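/- Let m ≥ 2. The ring endomorphism of ℝ⟦X₁, …, X_m⟧ given by the substitution X_i ↦ X_i·X_m for 1 ≤ i ≤ m−1 and X_m ↦ X_m is injective. -/

import Mathlib

/-- `IsSubstitutionBy σ φ` says that the ℝ-algebra endomorphism `φ` of
`ℝ⟦X₁, …, X_m⟧` is the substitution `X_k ↦ σ k`: it sends each variable `X_k`
to `σ k`, and it does not decrease the order of series (which, together with the
values on the variables, uniquely determines the substitution endomorphism when
each `σ k` has zero constant term). -/
def IsSubstitutionBy {m : ℕ} (σ : Fin m → MvPowerSeries (Fin m) ℝ)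
    (φ : MvPowerSeries (Fin m) ℝ →ₐ[ℝ] MvPowerSeries (Fin m) ℝ) : Prop :=
  (∀ k, φ (MvPowerSeries.X k) = σ k) ∧
  ∀ (F : MvPowerSeries (Fin m) ℝ) (d : ℕ),
    (∀ α : Fin m →₀ ℕ, (∑ j, α j) < d → MvPowerSeries.coeff α F = 0) →
    ∀ β : Fin m →₀ ℕ, (∑ j, β j) < d → MvPowerSeries.coeff β (φ F) = 0

/-!
On monomials the substitution acts as `X^α ↦ X^(T α)` with `T α = α + (∑_{j ≠ e} α j) • eₑ`,
where `e` is the last variable. The exponent map `T` is injective and does not lower total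
degree. As `φ` does not lower order, the coefficient of `X^(T α)` in `φ f` only sees the
truncation of `f` below total degree `|T α| + 1`; on that polynomial it is the coefficient of
`X^α`. So `φ f` determines every coefficient of `f`.
-/

open MvPowerSeries Finsupp

section MonomialSubstitution

variable {ι R : Type*} [CommSemiring R]

theorem map_monomial_of_map_X {φ : MvPowerSeries ι R →ₐ[R] MvPowerSeries ι R}
    {T : (ι →₀ ℕ) →+ (ι →₀ ℕ)} (hX : ∀ k, φ (X k) = monomial (T (single k 1)) 1)
    (α : ι →₀ ℕ) (c : R) : φ (monomial α c) = monomial (T α) c := by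
  induction α using Finsupp.induction generalizing c with
  | zero =>
    rw [map_zero, monomial_zero_eq_C_apply, c_eq_algebraMap, φ.commutes]
  | single_add k n α _ _ ih =>
    have : monomial (single k n + α) c = (X k) ^ n * monomial α c := by
      rw [X_pow_eq, monomial_mul_monomial, one_mul]
    rw [this, map_mul, map_pow, hX, ih, monomial_pow, monomial_mul_monomial, one_pow, one_mul,
      ← map_nsmul, smul_single_one, map_add]

end MonomialSubstitution

section CoefficientExtraction

variable {ι R F : Type*} [CommRing R] [FunLike F (MvPowerSeries ι R) (MvPowerSeries ι R)]
  [AddMonoidHomClass F (MvPowerSeries ι R) (MvPowerSeries ι R)] {φ : F}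

variable (φ) in
def OrderNondecreasing : Prop :=
  ∀ (f : MvPowerSeries ι R) (d : ℕ), (∀ α : ι →₀ ℕ, α.degree < d → coeff α f = 0) →
    ∀ β : ι →₀ ℕ, β.degree < d → coeff β (φ f) = 0

theorem coeff_map_eq_of_coeff_eq (hφ : OrderNondecreasing φ)
    {f g : MvPowerSeries ι R} {β : ι →₀ ℕ}
    (h : ∀ α : ι →₀ ℕ, α.degree ≤ β.degree → coeff α f = coeff α g) :
    coeff β (φ f) = coeff β (φ g) := by
  rw [← sub_eq_zero, ← map_sub, ← map_sub]
  refine hφ (f - g) (β.degree + 1) (fun α hα => ?_) β (Nat.lt_succ_self _)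
  rw [map_sub, h α (Nat.le_of_lt_succ hα), sub_self]

variable {T : (ι →₀ ℕ) → (ι →₀ ℕ)}

theorem coeff_map_coe_of_map_monomial
    (hmono : ∀ (α : ι →₀ ℕ) (c : R), φ (monomial α c) = monomial (T α) c)
    (hT : Function.Injective T) (p : MvPolynomial ι R) (α : ι →₀ ℕ) :
    coeff (T α) (φ p) = p.coeff α := by
  classical
  induction p using MvPolynomial.induction_on' with
  | monomial u a =>
    rw [MvPolynomial.coe_monomial, hmono, coeff_monomial, MvPolynomial.coeff_monomial]
    simp only [hT.eq_iff, eq_comm]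
  | add p q hp hq => rw [MvPolynomial.coe_add, map_add, map_add, hp, hq, MvPolynomial.coeff_add]

variable [Finite ι]

theorem coeff_map_apply_eq_coeff (hφ : OrderNondecreasing φ)
    (hmono : ∀ (α : ι →₀ ℕ) (c : R), φ (monomial α c) = monomial (T α) c)
    (hT : Function.Injective T) (hdeg : ∀ α, α.degree ≤ (T α).degree)
    (f : MvPowerSeries ι R) (α : ι →₀ ℕ) :
    coeff (T α) (φ f) = coeff α f := by
  set N := (T α).degree + 1
  calc coeff (T α) (φ f) = coeff (T α) (φ (truncTotal N f)) :=
        coeff_map_eq_of_coeff_eq hφ fun γ hγ => (coeff_truncTotal f (by omega)).symm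
    _ = (truncTotal N f).coeff α := coeff_map_coe_of_map_monomial hmono hT _ α
    _ = coeff α f := coeff_truncTotal f (by have := hdeg α; omega)

theorem injective_of_map_monomial (hφ : OrderNondecreasing φ)
    (hmono : ∀ (α : ι →₀ ℕ) (c : R), φ (monomial α c) = monomial (T α) c)
    (hT : Function.Injective T) (hdeg : ∀ α, α.degree ≤ (T α).degree) :
    Function.Injective φ := by
  refine (injective_iff_map_eq_zero φ).2 fun f hf => ?_
  ext α
  rw [← coeff_map_apply_eq_coeff hφ hmono hT hdeg, hf, map_zero, map_zero]

end CoefficientExtraction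

section BlowupExponent

variable {ι : Type*} (e : ι)

noncomputable def blowupExponent : (ι →₀ ℕ) →+ (ι →₀ ℕ) :=
  AddMonoidHom.id _ + (singleAddHom e).comp (degree.comp (eraseAddHom e))

theorem blowupExponent_apply (α : ι →₀ ℕ) :
    blowupExponent e α = α + single e (α.erase e).degree := rfl

theorem erase_blowupExponent (α : ι →₀ ℕ) : (blowupExponent e α).erase e = α.erase e := by
  rw [blowupExponent_apply, erase_add, erase_single, add_zero]

theorem blowupExponent_injective : Function.Injective (blowupExponent e) := by
  intro α β h
  have h' := congrArg (Finsupp.erase e) h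
  rw [erase_blowupExponent, erase_blowupExponent] at h'
  rwa [blowupExponent_apply, blowupExponent_apply, h', add_left_inj] at h

theorem degree_le_degree_blowupExponent (α : ι →₀ ℕ) :
    α.degree ≤ (blowupExponent e α).degree := by
  rw [blowupExponent_apply, map_add]
  exact Nat.le_add_right _ _

theorem monomial_blowupExponent_single_one [DecidableEq ι] {R : Type*} [CommSemiring R]
    (k : ι) :
    monomial (blowupExponent e (single k 1)) (1 : R) = if k = e then X e else X k * X e := by
  split_ifs with hk
  · rw [hk, blowupExponent_apply, erase_single, map_zero, single_zero, add_zero, X_def]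
  · rw [blowupExponent_apply, erase_single_ne (Ne.symm hk), degree_single, X_def, X_def,
      monomial_mul_monomial, one_mul]

end BlowupExponent

/-- The substitution `X_i ↦ X_i · X_m` for `1 ≤ i ≤ m−1`, `X_m ↦ X_m`,
acts injectively on `ℝ⟦X₁, …, X_m⟧`. -/
theorem blowup_all_subst_injective (m : ℕ) (hm : 2 ≤ m)
    (φ : MvPowerSeries (Fin m) ℝ →ₐ[ℝ] MvPowerSeries (Fin m) ℝ)
    (hφ : IsSubstitutionBy
      (fun k => if k = (⟨m - 1, by omega⟩ : Fin m) then
          MvPowerSeries.X (⟨m - 1, by omega⟩ : Fin m)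
        else MvPowerSeries.X k * MvPowerSeries.X (⟨m - 1, by omega⟩ : Fin m)) φ) :
    Function.Injective φ := by
  obtain ⟨hX, hord⟩ := hφ
  set e : Fin m := ⟨m - 1, by omega⟩
  have hmono := map_monomial_of_map_X (φ := φ) (T := blowupExponent e) fun k => by
    rw [hX, monomial_blowupExponent_single_one]
  refine injective_of_map_monomial ?_ hmono (blowupExponent_injective e)
    (degree_le_degree_blowupExponent e)
  simpa only [OrderNondecreasing, degree_eq_sum] using hord
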